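/- For the Farey natural extension ℱ on Ω = [0,1]^2 with vertical strips V_k = (1/(k+1), 1/k] × [0,1] and horizontal strips H_k = [0,1] × (1/(k+1), 1/k], one has ℱ(V_1) = H_1 up to Lebesgue-null sets, and for every k > 1, ℱ(V_k ∩ H_b) = V_{k-1} ∩ H_{b+1} up to Lebesgue-null sets, for every b ≥ 1. -/

import Mathlib

/-!
For `x ≤ 1/2` the map `ℱ` is the product of `x ↦ x / (1 - x)` and `y ↦ y / (1 + y)`, which in
reciprocal coordinates are the shifts `1/x ↦ 1/x - 1` and `1/y ↦ 1/y + 1`. Both are continuous and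
increasing, so they carry the strip `(1/(n+2), 1/(n+1)]` onto `(1/(n+1), 1/n]`, respectively
`(1/(n+1), 1/n]` onto `(1/(n+2), 1/(n+1)]`; this gives `ℱ(V_k ∩ H_b) = V_{k-1} ∩ H_{b+1}` exactly.
On `V_1` the map is `(x, y) ↦ ((1 - x) / x, 1 / (1 + y))`, sending `(1/2, 1] × [0, 1]` onto
`[0, 1) × [1/2, 1]`, which differs from `H_1` only by two segments.
-/

open MeasureTheory

noncomputable section

/-- Ito's natural extension map of the Farey tent map on `Ω = [0,1]²`. -/
def Fbar (p : ℝ × ℝ) : ℝ × ℝ :=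
  if p.1 ≤ 1 / 2 then (p.1 / (1 - p.1), p.2 / (1 + p.2))
  else ((1 - p.1) / p.1, 1 / (1 + p.2))

/-- The vertical strip `V_k = (1/(k+1), 1/k] × [0,1]`. -/
def V (k : ℕ) : Set (ℝ × ℝ) := Set.Ioc (1 / ((k : ℝ) + 1)) (1 / (k : ℝ)) ×ˢ Set.Icc 0 1

/-- The horizontal strip `H_k = [0,1] × (1/(k+1), 1/k]`. -/
def H (k : ℕ) : Set (ℝ × ℝ) := Set.Icc (0 : ℝ) 1 ×ˢ Set.Ioc (1 / ((k : ℝ) + 1)) (1 / (k : ℝ))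

open Set

lemma strictMonoOn_div_one_sub : StrictMonoOn (fun x : ℝ => x / (1 - x)) (Iio 1) := by
  intro x hx y hy hxy
  simp only [mem_Iio] at hx hy
  rw [div_lt_div_iff₀ (by linarith) (by linarith)]
  nlinarith

lemma strictMonoOn_div_one_add : StrictMonoOn (fun y : ℝ => y / (1 + y)) (Ioi (-1)) := by
  intro x hx y hy hxy
  simp only [mem_Ioi] at hx hy
  rw [div_lt_div_iff₀ (by linarith) (by linarith)]
  nlinarith

lemma strictAntiOn_one_sub_div : StrictAntiOn (fun x : ℝ => (1 - x) / x) (Ioi 0) := by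
  intro x hx y hy hxy
  simp only [mem_Ioi] at hx hy
  rw [div_lt_div_iff₀ hy hx]
  nlinarith

lemma strictAntiOn_one_div_one_add : StrictAntiOn (fun y : ℝ => 1 / (1 + y)) (Ioi (-1)) := by
  intro x hx y hy hxy
  simp only [mem_Ioi] at hx hy
  exact one_div_lt_one_div_of_lt (by linarith) (by linarith)

lemma one_div_div_one_sub_one_div {m : ℝ} (hm : m ≠ 0) : 1 / m / (1 - 1 / m) = 1 / (m - 1) := by
  rw [one_sub_div hm, div_div_div_cancel_right₀ hm]

lemma one_div_div_one_add_one_div {m : ℝ} (hm : m ≠ 0) : 1 / m / (1 + 1 / m) = 1 / (m + 1) := by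
  rw [one_add_div hm, div_div_div_cancel_right₀ hm, add_comm]

lemma image_div_one_sub_Ioc {n : ℝ} (hn : 0 < n) :
    (fun x : ℝ => x / (1 - x)) '' Ioc (1 / (n + 1 + 1)) (1 / (n + 1)) =
      Ioc (1 / (n + 1)) (1 / n) := by
  have hsub : Icc (1 / (n + 1 + 1)) (1 / (n + 1)) ⊆ Iio 1 := fun x hx =>
    hx.2.trans_lt ((div_lt_one (by linarith)).2 (by linarith))
  have hcont : ContinuousOn (fun x : ℝ => x / (1 - x)) (Icc (1 / (n + 1 + 1)) (1 / (n + 1))) :=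
    continuousOn_id.div (continuousOn_const.sub continuousOn_id) fun x hx =>
      (sub_pos.2 (hsub hx)).ne'
  rw [hcont.image_Ioc_of_strictMonoOn (one_div_le_one_div_of_le (by positivity) (by linarith))
    (strictMonoOn_div_one_sub.mono hsub), one_div_div_one_sub_one_div (by positivity),
    one_div_div_one_sub_one_div (by positivity), add_sub_cancel_right, add_sub_cancel_right]

lemma image_div_one_add_Ioc {n : ℝ} (hn : 0 < n) :
    (fun y : ℝ => y / (1 + y)) '' Ioc (1 / (n + 1)) (1 / n) =
      Ioc (1 / (n + 1 + 1)) (1 / (n + 1)) := by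
  have hsub : Icc (1 / (n + 1)) (1 / n) ⊆ Ioi (-1) := fun y hy =>
    lt_of_lt_of_le (by linarith [one_div_pos.2 (by linarith : 0 < n + 1)]) hy.1
  have hcont : ContinuousOn (fun y : ℝ => y / (1 + y)) (Icc (1 / (n + 1)) (1 / n)) :=
    continuousOn_id.div (continuousOn_const.add continuousOn_id) fun y hy =>
      (neg_lt_iff_pos_add'.1 (hsub hy)).ne'
  rw [hcont.image_Ioc_of_strictMonoOn (one_div_le_one_div_of_le hn (by linarith))
    (strictMonoOn_div_one_add.mono hsub), one_div_div_one_add_one_div (by positivity),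
    one_div_div_one_add_one_div hn.ne']

lemma image_one_sub_div_Ioc : (fun x : ℝ => (1 - x) / x) '' Ioc (1 / 2) 1 = Ico 0 1 := by
  have hsub : Icc (1 / 2 : ℝ) 1 ⊆ Ioi 0 := fun x hx => lt_of_lt_of_le (by norm_num) hx.1
  have hcont : ContinuousOn (fun x : ℝ => (1 - x) / x) (Icc (1 / 2) 1) :=
    (continuousOn_const.sub continuousOn_id).div continuousOn_id fun x hx => (hsub hx).ne'
  rw [hcont.image_Ioc_of_strictAntiOn (by norm_num) (strictAntiOn_one_sub_div.mono hsub)]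
  norm_num

lemma image_one_div_one_add_Icc : (fun y : ℝ => 1 / (1 + y)) '' Icc 0 1 = Icc (1 / 2) 1 := by
  have hsub : Icc (0 : ℝ) 1 ⊆ Ioi (-1) := fun y hy => lt_of_lt_of_le (by norm_num) hy.1
  have hcont : ContinuousOn (fun y : ℝ => 1 / (1 + y)) (Icc 0 1) :=
    continuousOn_const.div (continuousOn_const.add continuousOn_id) fun y hy =>
      (neg_lt_iff_pos_add'.1 (hsub hy)).ne'
  rw [hcont.image_Icc_of_antitoneOn (by norm_num)
    (strictAntiOn_one_div_one_add.mono hsub).antitoneOn]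
  norm_num

lemma Fbar_of_le {p : ℝ × ℝ} (h : p.1 ≤ 1 / 2) : Fbar p = (p.1 / (1 - p.1), p.2 / (1 + p.2)) :=
  if_pos h

lemma Fbar_of_lt {p : ℝ × ℝ} (h : 1 / 2 < p.1) : Fbar p = ((1 - p.1) / p.1, 1 / (1 + p.2)) :=
  if_neg h.not_ge

lemma Ioc_one_div_subset_Icc (k : ℕ) : Ioc (1 / ((k : ℝ) + 1)) (1 / k) ⊆ Icc 0 1 := fun _ hx =>
  ⟨(one_div_pos.2 (by positivity)).le.trans hx.1.le,
    hx.2.trans (by rw [one_div]; exact Nat.cast_inv_le_one k)⟩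

lemma V_inter_H (k b : ℕ) :
    V k ∩ H b = Ioc (1 / ((k : ℝ) + 1)) (1 / k) ×ˢ Ioc (1 / ((b : ℝ) + 1)) (1 / b) := by
  rw [V, H, prod_inter_prod, inter_eq_left.2 (Ioc_one_div_subset_Icc k),
    inter_eq_right.2 (Ioc_one_div_subset_Icc b)]

lemma Fbar_image_V_one : Fbar '' V 1 = Ico 0 1 ×ˢ Icc (1 / 2) 1 := by
  have hV : V 1 = Ioc (1 / 2 : ℝ) 1 ×ˢ Icc 0 1 := by norm_num [V]
  have hF : EqOn Fbar (Prod.map (fun x => (1 - x) / x) fun y => 1 / (1 + y)) (V 1) := by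
    rw [hV]
    exact fun p hp => Fbar_of_lt hp.1.1
  rw [hF.image_eq, hV, prodMap_image_prod, image_one_sub_div_Ioc, image_one_div_one_add_Icc]

lemma Fbar_image_V_succ_inter_H {n b : ℕ} (hn : n ≠ 0) (hb : b ≠ 0) :
    Fbar '' (V (n + 1) ∩ H b) = V n ∩ H (b + 1) := by
  have hn' : (1 : ℝ) ≤ n := by exact_mod_cast Nat.one_le_iff_ne_zero.2 hn
  have hF : EqOn Fbar (Prod.map (fun x => x / (1 - x)) fun y => y / (1 + y))
      (V (n + 1) ∩ H b) := by
    refine fun p hp => Fbar_of_le ?_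
    rw [V_inter_H] at hp
    refine hp.1.2.trans (one_div_le_one_div_of_le (by norm_num) ?_)
    push_cast
    linarith
  rw [hF.image_eq, V_inter_H, V_inter_H, prodMap_image_prod]
  push_cast
  rw [image_div_one_sub_Ioc (by linarith), image_div_one_add_Ioc (by positivity)]

lemma Ico_prod_Icc_ae_eq_H_one : (Ico 0 1 ×ˢ Icc (1 / 2) 1 : Set (ℝ × ℝ)) =ᵐ[volume] H 1 := by
  have hH : H 1 = Icc (0 : ℝ) 1 ×ˢ Ioc (1 / 2) 1 := by norm_num [H]
  rw [hH]
  exact Measure.set_prod_ae_eq Ico_ae_eq_Icc Ioc_ae_eq_Icc.symm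

/-- Up to Lebesgue-null sets, `ℱ(V_1) = H_1`, and for every `k > 1` and `b ≥ 1`,
`ℱ(V_k ∩ H_b) = V_{k-1} ∩ H_{b+1}`. -/
theorem stmt15 :
    volume (symmDiff (Fbar '' V 1) (H 1)) = 0 ∧
      ∀ k b : ℕ, 1 < k → 1 ≤ b →
        volume (symmDiff (Fbar '' (V k ∩ H b)) (V (k - 1) ∩ H (b + 1))) = 0 := by
  refine ⟨?_, fun k b hk hb => ?_⟩
  · rw [Fbar_image_V_one, measure_symmDiff_eq_zero_iff]
    exact Ico_prod_Icc_ae_eq_H_one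
  · obtain ⟨n, rfl⟩ : ∃ n, k = n + 1 := ⟨k - 1, by omega⟩
    rw [Nat.add_sub_cancel, Fbar_image_V_succ_inter_H (by omega) (by omega), symmDiff_self]
    exact measure_empty

end
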